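/- Let ν ∈ (1,2], β > 1, θ ∈ (0,1), and let g : ℝⁿ → ℝ be C¹ with gradient bounded by c on the relevant region. Given ρ_k > 0 with ρ_k → 0, points x_k and y_k = x_k + s_k d_k with ‖d_k‖ = 1 and 0 ≤ s_k ≤ ρ_k^β/θ, the difference (ν/ρ_k^{ν−1})·| max{g(x_k),0}^{ν−1} − max{g(y_k),0}^{ν−1} | is bounded above by c^{ν−1} ν θ^{1−ν} ρ_k^{(β−1)(ν−1)}, and hence converges to 0. -/

import Mathlib

/-! For `p = ν - 1 ∈ (0, 1]` the map `t ↦ max t 0 ^ p` satisfies `|max a 0 ^ p - max b 0 ^ p| ≤ |a - b| ^ p`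
(subadditivity of `t ↦ t ^ p` on `[0, ∞)`), and the mean value theorem gives
`|g xₖ - g yₖ| ≤ c sₖ ≤ c ρₖ^β / θ`. Hence the quantity is at most `ν ρₖ^(1-ν) (c ρₖ^β / θ)^(ν-1)`,
a constant times `ρₖ^((β-1)(ν-1)) → 0`. -/

open Filter

namespace Real

theorem abs_rpow_sub_rpow_le {a b p : ℝ} (ha : 0 ≤ a) (hb : 0 ≤ b) (hp0 : 0 ≤ p) (hp1 : p ≤ 1) :
    |a ^ p - b ^ p| ≤ |a - b| ^ p := by
  wlog hba : b ≤ a generalizing a b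
  · rw [abs_sub_comm, abs_sub_comm a]
    exact this hb ha (le_of_not_ge hba)
  have hsub : a ^ p ≤ b ^ p + (a - b) ^ p := by
    simpa using rpow_add_le_add_rpow hb (sub_nonneg.2 hba) hp0 hp1
  rw [abs_of_nonneg (sub_nonneg.2 (rpow_le_rpow hb hba hp0)), abs_of_nonneg (sub_nonneg.2 hba)]
  linarith

theorem abs_max_zero_rpow_sub_le {p : ℝ} (a b : ℝ) (hp0 : 0 ≤ p) (hp1 : p ≤ 1) :
    |max a 0 ^ p - max b 0 ^ p| ≤ |a - b| ^ p :=
  (abs_rpow_sub_rpow_le (le_max_right _ _) (le_max_right _ _) hp0 hp1).trans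
    (rpow_le_rpow (abs_nonneg _) (abs_max_sub_max_le_abs a b 0) hp0)

theorem div_rpow_mul_rpow_eq {ν β θ ρ c : ℝ} (hc : 0 ≤ c) (hθ : 0 < θ) (hρ : 0 < ρ) :
    ν / ρ ^ (ν - 1) * (c * (ρ ^ β / θ)) ^ (ν - 1) =
      c ^ (ν - 1) * ν * θ ^ (1 - ν) * ρ ^ ((β - 1) * (ν - 1)) := by
  rw [mul_rpow hc (by positivity), div_rpow (by positivity) hθ.le, ← rpow_mul hρ.le,
    show 1 - ν = -(ν - 1) by ring, rpow_neg hθ.le,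
    show (β - 1) * (ν - 1) = β * (ν - 1) - (ν - 1) by ring, rpow_sub hρ (β * (ν - 1))]
  field_simp

end Real

theorem abs_max_zero_rpow_comp_sub_le {E : Type*} [NormedAddCommGroup E] [NormedSpace ℝ E]
    {g : E → ℝ} (hg : Differentiable ℝ g) {c : ℝ} (hgrad : ∀ x, ‖fderiv ℝ g x‖ ≤ c)
    {p : ℝ} (hp0 : 0 ≤ p) (hp1 : p ≤ 1) (x y : E) :
    |max (g x) 0 ^ p - max (g y) 0 ^ p| ≤ (c * ‖x - y‖) ^ p := by
  have hlip : |g x - g y| ≤ c * ‖x - y‖ :=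
    convex_univ.norm_image_sub_le_of_norm_fderiv_le (fun z _ => hg z) (fun z _ => hgrad z)
      (Set.mem_univ y) (Set.mem_univ x)
  exact (Real.abs_max_zero_rpow_sub_le _ _ hp0 hp1).trans
    (Real.rpow_le_rpow (abs_nonneg _) hlip hp0)

theorem stmt_15 (n : ℕ) (g : EuclideanSpace ℝ (Fin n) → ℝ)
    (hC1 : ContDiff ℝ 1 g) (c : ℝ) (hgrad : ∀ x, ‖fderiv ℝ g x‖ ≤ c)
    (ν β θ : ℝ) (hν : ν ∈ Set.Ioc (1:ℝ) 2) (hβ : 1 < β) (hθ : θ ∈ Set.Ioo (0:ℝ) 1)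
    (ρ s : ℕ → ℝ) (hρpos : ∀ k, 0 < ρ k) (hρ0 : Tendsto ρ atTop (nhds 0))
    (x d : ℕ → EuclideanSpace ℝ (Fin n)) (hd : ∀ k, ‖d k‖ = 1)
    (hs : ∀ k, s k ∈ Set.Icc 0 (ρ k ^ β / θ))
    (y : ℕ → EuclideanSpace ℝ (Fin n)) (hy : ∀ k, y k = x k + s k • d k) :
    (∀ k, (ν / ρ k ^ (ν - 1)) *
        |max (g (x k)) 0 ^ (ν - 1) - max (g (y k)) 0 ^ (ν - 1)| ≤
          c ^ (ν - 1) * ν * θ ^ (1 - ν) * ρ k ^ ((β - 1) * (ν - 1))) ∧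
      Tendsto (fun k => (ν / ρ k ^ (ν - 1)) *
        |max (g (x k)) 0 ^ (ν - 1) - max (g (y k)) 0 ^ (ν - 1)|) atTop (nhds 0) := by
  obtain ⟨hν1, hν2⟩ := hν
  have hc : 0 ≤ c := (norm_nonneg _).trans (hgrad 0)
  have bound : ∀ k, (ν / ρ k ^ (ν - 1)) *
      |max (g (x k)) 0 ^ (ν - 1) - max (g (y k)) 0 ^ (ν - 1)| ≤
        c ^ (ν - 1) * ν * θ ^ (1 - ν) * ρ k ^ ((β - 1) * (ν - 1)) := by
    intro k
    have hdist : ‖x k - y k‖ ≤ ρ k ^ β / θ := by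
      rw [hy k, sub_add_cancel_left, norm_neg, norm_smul, hd k, mul_one,
        Real.norm_of_nonneg (hs k).1]
      exact (hs k).2
    have hρ := hρpos k
    calc (ν / ρ k ^ (ν - 1)) * |max (g (x k)) 0 ^ (ν - 1) - max (g (y k)) 0 ^ (ν - 1)|
        ≤ ν / ρ k ^ (ν - 1) * (c * (ρ k ^ β / θ)) ^ (ν - 1) := by
          gcongr
          exact (abs_max_zero_rpow_comp_sub_le (hC1.differentiable one_ne_zero) hgrad
            (by linarith) (by linarith) _ _).trans (by gcongr)
      _ = _ := Real.div_rpow_mul_rpow_eq hc hθ.1 hρ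
  have hexp : 0 < (β - 1) * (ν - 1) := mul_pos (by linarith) (by linarith)
  have hlim := (hρ0.rpow_const (Or.inr hexp.le)).const_mul (c ^ (ν - 1) * ν * θ ^ (1 - ν))
  rw [Real.zero_rpow hexp.ne', mul_zero] at hlim
  exact ⟨bound, squeeze_zero (fun k => by have := hρpos k; positivity) bound hlim⟩
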